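/- For a local ring R, the matrix ring M₂(R) is strongly clean if and only if for all w₀, w₁ ∈ J(R) the polynomial t² - (1+w₁)t - w₀ has a left root λ ∈ J(R) (i.e., λ² - λ(1+w₁) - w₀ = 0). -/

import Mathlib

/-!
If `A` and `A - 1` are non-units of `M₂(R)`, then `A` has a cyclic vector, so it is similar to a
companion matrix `[[0, α], [1, β]]` with `α, α + β - 1 ∈ J(R)`. Left roots `λ` of `t² - tβ - α`
are exactly the row eigenvectors `(1, λ)`. The hypothesis provides one root `λ ∈ J(R)` and, after
the substitution `t ↦ 1 - t`, a second root `μ ∈ 1 + J(R)`. Then `[[1, λ], [1, μ]]` is invertible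
and conjugates the companion matrix to `diag(λ, μ)`, which is strongly clean because every
element of a local ring is.

Conversely, write the companion matrix `C` of `t² - (1 + w₁)t - w₀` as `E + U`. Its idempotent
part `E` is neither `0` nor `1`, and over a local ring such an idempotent is similar to
`diag(1, 0)`. A matrix `P` realizing this similarity makes `P C P⁻¹` diagonal with `(0, 0)`
entry `p ∈ J(R)`. Let `(x, y)` be the first row of `P`: then `x` is a unit and `x⁻¹ y` is the
root.
-/
/-- An element of a ring is strongly clean if it is the sum of an idempotent and a unit
that commute with each other. -/
def IsStronglyClean {S : Type*} [Ring S] (a : S) : Prop :=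
  ∃ e u : S, IsIdempotentElem e ∧ IsUnit u ∧ a = e + u ∧ e * u = u * e

namespace IsStronglyClean

variable {S T : Type*} [Ring S] [Ring T]

theorem of_isUnit {a : S} (ha : IsUnit a) : IsStronglyClean a :=
  ⟨0, a, .zero, ha, (zero_add a).symm, by simp⟩

theorem of_isUnit_sub_one {a : S} (ha : IsUnit (a - 1)) : IsStronglyClean a :=
  ⟨1, a - 1, .one, ha, by abel, by simp⟩

theorem map {a : S} (h : IsStronglyClean a) (f : S →+* T) : IsStronglyClean (f a) := by
  obtain ⟨e, u, he, hu, rfl, hcomm⟩ := h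
  exact ⟨f e, f u, he.map f, hu.map f, map_add f e u, by rw [← map_mul, hcomm, map_mul]⟩

theorem of_semiconjBy {q a b : S} (hq : IsUnit q) (h : SemiconjBy q a b)
    (hb : IsStronglyClean b) : IsStronglyClean a := by
  obtain ⟨u, rfl⟩ := hq
  rw [← Units.inv_mul_cancel_left u a, h.eq, ← mul_assoc]
  simpa [ConjAct.units_smul_def] using
    hb.map (MulSemiringAction.toRingHom _ S (ConjAct.toConjAct u⁻¹))

theorem pi {ι : Type*} {R : ι → Type*} [∀ i, Ring (R i)] {a : ∀ i, R i}
    (h : ∀ i, IsStronglyClean (a i)) : IsStronglyClean a := by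
  choose e u he hu hsum hcomm using h
  exact ⟨e, u, funext he, Pi.isUnit_iff.mpr hu, funext hsum, funext hcomm⟩

end IsStronglyClean

namespace IsLocalRing

variable {R : Type*} [Ring R] [IsLocalRing R]

theorem isUnit_one_sub {a : R} (ha : ¬IsUnit a) : IsUnit (1 - a) :=
  (isUnit_or_isUnit_of_add_one (add_sub_cancel a 1)).resolve_left ha

theorem isUnit_sub_one {a : R} (ha : ¬IsUnit a) : IsUnit (a - 1) := by
  simpa using (isUnit_one_sub ha).neg

theorem eq_zero_or_eq_one_of_isIdempotentElem {e : R} (he : IsIdempotentElem e) :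
    e = 0 ∨ e = 1 := by
  refine (isUnit_or_isUnit_of_add_one (add_sub_cancel e 1)).symm.imp (fun h => ?_) (fun h => ?_)
  · exact h.mul_right_eq_zero.mp (by rw [sub_mul, one_mul, he.eq, sub_self])
  · exact h.mul_left_cancel (by rw [he.eq, mul_one])

instance isDedekindFiniteMonoid : IsDedekindFiniteMonoid R where
  mul_eq_one_symm {a b} hab := by
    have hba : IsIdempotentElem (b * a) := by
      rw [IsIdempotentElem, mul_assoc, ← mul_assoc a, hab, one_mul]
    refine (eq_zero_or_eq_one_of_isIdempotentElem hba).resolve_left fun h => ?_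
    apply one_ne_zero (α := R)
    rw [← hab, ← one_mul a, ← hab, mul_assoc, mul_assoc, ← mul_assoc b, h, zero_mul,
      mul_zero]

theorem not_isUnit_sub {a b : R} (ha : ¬IsUnit a) (hb : ¬IsUnit b) : ¬IsUnit (a - b) := by
  rw [sub_eq_add_neg]; exact nonunits_add ha ((IsUnit.neg_iff b).not.mpr hb)

theorem isUnit_add_of_not_isUnit {a b : R} (ha : IsUnit a) (hb : ¬IsUnit b) :
    IsUnit (a + b) := by
  by_contra h
  exact not_isUnit_sub h hb (by simpa using ha)

theorem isStronglyClean (a : R) : IsStronglyClean a := by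
  by_cases ha : IsUnit a
  · exact .of_isUnit ha
  · exact .of_isUnit_sub_one (isUnit_sub_one ha)

end IsLocalRing

theorem SemiconjBy.isUnit_iff {S : Type*} [Monoid S] {q a b : S} (h : SemiconjBy q a b)
    (hq : IsUnit q) : IsUnit a ↔ IsUnit b := by
  rw [← hq.mul_left_iff, h.eq, hq.mul_right_iff]

namespace Matrix

variable {n R : Type*} [Fintype n] [DecidableEq n] [Ring R]

theorem isStronglyClean_diagonal {d : n → R} (h : ∀ i, IsStronglyClean (d i)) :
    IsStronglyClean (diagonal d) :=
  (IsStronglyClean.pi h).map (diagonalRingHom n R)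

theorem isUnit_diagonal_iff_forall {d : n → R} : IsUnit (diagonal d) ↔ ∀ i, IsUnit (d i) := by
  refine ⟨fun ⟨u, hu⟩ i => ⟨⟨d i, (↑u⁻¹ : Matrix n n R) i i, ?_, ?_⟩, rfl⟩,
    fun h => ?_⟩
  · simpa [hu, diagonal_mul] using congr_fun₂ u.mul_inv i i
  · simpa [hu, mul_diagonal] using congr_fun₂ u.inv_mul i i
  · exact (Pi.isUnit_iff.mpr h).map (diagonalRingHom n R)

theorem exists_isUnit_apply_of_isUnit [IsLocalRing R] {M : Matrix n n R} (hM : IsUnit M) (i : n) :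
    ∃ j, IsUnit (M i j) := by
  obtain ⟨u, rfl⟩ := hM
  have h : IsUnit (((u : Matrix n n R) * (↑u⁻¹ : Matrix n n R)) i i) := by simp
  rw [mul_apply] at h
  obtain ⟨j, -, hj⟩ := IsLocalRing.exists_of_isUnit_sum h
  exact ⟨j, isUnit_of_mul_isUnit_left hj⟩

theorem eq_diagonal_of_commute_diagonal_one_zero {B : Matrix (Fin 2) (Fin 2) R}
    (h : Commute (diagonal ![1, 0]) B) : B = diagonal ![B 0 0, B 1 1] := by
  have h₀₁ := congr_fun₂ h.eq 0 1
  have h₁₀ := congr_fun₂ h.eq 1 0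
  simp [diagonal_mul, mul_diagonal] at h₀₁ h₁₀
  ext i j
  fin_cases i <;> fin_cases j <;> simp [h₀₁, h₁₀]

theorem isUnit_fin_two_iff_schur (a : Rˣ) (b c d : R) :
    IsUnit !![(a : R), b; c, d] ↔ IsUnit (d - c * ↑a⁻¹ * b) := by
  have hL : IsUnit !![1, 0; c * ↑a⁻¹, (1 : R)] :=
    ⟨⟨_, !![1, 0; -(c * ↑a⁻¹), 1], by simp [one_fin_two], by simp [one_fin_two]⟩, rfl⟩
  have hU : IsUnit !![1, ↑a⁻¹ * b; 0, (1 : R)] :=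
    ⟨⟨_, !![1, -(↑a⁻¹ * b); 0, 1], by simp [one_fin_two], by simp [one_fin_two]⟩, rfl⟩
  have hLDU : !![(a : R), b; c, d] = !![1, 0; c * ↑a⁻¹, 1] *
      diagonal ![(a : R), d - c * ↑a⁻¹ * b] * !![1, ↑a⁻¹ * b; 0, 1] := by
    simp [diagonal_fin_two, mul_assoc]
  rw [hLDU, hU.mul_right_iff, hL.mul_left_iff, isUnit_diagonal_iff_forall, Fin.forall_fin_two]
  simp

theorem isUnit_fin_two_iff_schur_one (b c d : R) :
    IsUnit !![1, b; c, d] ↔ IsUnit (d - c * b) := by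
  simpa using isUnit_fin_two_iff_schur 1 b c d

theorem isUnit_swap : IsUnit !![0, 1; 1, (0 : R)] :=
  ⟨⟨_, !![0, 1; 1, 0], by simp [one_fin_two], by simp [one_fin_two]⟩, rfl⟩

/-- The companion matrix of `t² - tβ - α`, acting on row vectors: `λ` is a left root iff
`(1, λ)` is a left eigenvector with eigenvalue `λ`. -/
def companion (α β : R) : Matrix (Fin 2) (Fin 2) R := !![0, α; 1, β]

theorem isUnit_companion_iff {α β : R} : IsUnit (companion α β) ↔ IsUnit α := by
  rw [← isUnit_swap.mul_left_iff, companion]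
  simpa using isUnit_fin_two_iff_schur_one β 0 α

theorem isUnit_companion_sub_one_iff {α β : R} :
    IsUnit (companion α β - 1) ↔ IsUnit (α + β - 1) := by
  have h := isUnit_fin_two_iff_schur (-1) α 1 (β - 1)
  have hsub : companion α β - 1 = !![-1, α; 1, β - 1] := by
    ext i j; fin_cases i <;> fin_cases j <;> simp [companion]
  simp only [Units.val_neg, Units.val_one, inv_neg, inv_one, one_mul, neg_one_mul,
    sub_neg_eq_add] at h
  rw [hsub, h]
  congr! 1
  abel

theorem exists_semiconjBy_companion_diagonal {α β l m : R} (hl : l * l = l * β + α)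
    (hm : m * m = m * β + α) (hlm : IsUnit (m - l)) :
    ∃ Q, IsUnit Q ∧ SemiconjBy Q (companion α β) (diagonal ![l, m]) := by
  refine ⟨!![1, l; 1, m], (isUnit_fin_two_iff_schur_one l 1 m).mpr (by rwa [one_mul]), ?_⟩
  simp [SemiconjBy, companion, diagonal_fin_two, hl, hm, add_comm]

def krylov (A : Matrix (Fin 2) (Fin 2) R) (v : Fin 2 → R) : Matrix (Fin 2) (Fin 2) R :=
  !![v 0, (A *ᵥ v) 0; v 1, (A *ᵥ v) 1]

theorem exists_semiconjBy_companion_of_isUnit_krylov {A : Matrix (Fin 2) (Fin 2) R}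
    {v : Fin 2 → R} (hv : IsUnit (krylov A v)) :
    ∃ Q, IsUnit Q ∧ ∃ α β, SemiconjBy Q A (companion α β) := by
  obtain ⟨u, hu⟩ := hv
  set Q : Matrix (Fin 2) (Fin 2) R := ↑u⁻¹
  set N := Q * A * krylov A v
  have hcol : ∀ i, N i 0 = (1 : Matrix (Fin 2) (Fin 2) R) i 1 := by
    intro i
    rw [← u.inv_mul, hu]
    simp [N, Q, mul_assoc, mul_apply, krylov, Fin.sum_univ_two, mulVec, dotProduct]
  refine ⟨Q, u⁻¹.isUnit, N 0 1, N 1 1, ?_⟩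
  have hN : N = companion (N 0 1) (N 1 1) := by
    rw [eta_fin_two N, hcol 0, hcol 1]; rfl
  rw [SemiconjBy, ← hN]
  simp [N, Q, ← hu, mul_assoc]

theorem exists_not_isUnit_mul_apply_zero_eq {C E P : Matrix (Fin 2) (Fin 2) R}
    (hC : ¬IsUnit C) (hCE : IsUnit (C - E)) (hEC : Commute E C) (hP : IsUnit P)
    (hPE : P * E = diagonal ![1, 0] * P) :
    ∃ p, ¬IsUnit p ∧ ∀ j, (P * C) 0 j = p * P 0 j := by
  obtain ⟨u, rfl⟩ := hP
  set B : Matrix (Fin 2) (Fin 2) R := u * C * (u⁻¹ : (Matrix (Fin 2) (Fin 2) R)ˣ)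
  have hBC : SemiconjBy ↑u C B := by simp [SemiconjBy, B, mul_assoc]
  have hDB : Commute (diagonal ![1, 0]) B := by
    refine u.mul_left_inj.mp ?_
    rw [← (SemiconjBy.mul_right hPE hBC).eq, ← (hBC.mul_right hPE).eq, hEC.eq]
  have hB : B = diagonal ![B 0 0, B 1 1] := eq_diagonal_of_commute_diagonal_one_zero hDB
  have hB₁₁ : IsUnit (B 1 1) := by
    have h := ((hBC.sub_right hPE).isUnit_iff u.isUnit).mp hCE
    rw [hB, diagonal_sub, isUnit_diagonal_iff_forall] at h
    simpa using h 1
  have hB₀₀ : ¬IsUnit (B 0 0) := by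
    intro h
    apply hC
    rw [hBC.isUnit_iff u.isUnit, hB, isUnit_diagonal_iff_forall, Fin.forall_fin_two]
    exact ⟨h, hB₁₁⟩
  refine ⟨B 0 0, hB₀₀, fun j => ?_⟩
  rw [hBC.eq, hB, diagonal_mul]
  rfl

section IsLocalRing

variable [IsLocalRing R]

open IsLocalRing

theorem isUnit_of_isUnit_diag_of_not_isUnit_apply_one_zero {M : Matrix (Fin 2) (Fin 2) R}
    (h₀₀ : IsUnit (M 0 0)) (h₁₁ : IsUnit (M 1 1)) (h₁₀ : ¬IsUnit (M 1 0)) :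
    IsUnit M := by
  obtain ⟨a, ha⟩ := h₀₀
  rw [eta_fin_two M, ← ha, isUnit_fin_two_iff_schur, sub_eq_add_neg]
  refine isUnit_add_of_not_isUnit h₁₁ ?_
  rw [IsUnit.neg_iff]
  exact mt isUnit_of_mul_isUnit_left (mt isUnit_of_mul_isUnit_left h₁₀)

theorem exists_isUnit_apply_of_isIdempotentElem {E : Matrix (Fin 2) (Fin 2) R}
    (hE : IsIdempotentElem E) (hE₀ : E ≠ 0) : ∃ i j, IsUnit (E i j) := by
  by_contra! h
  have hunit : IsUnit (1 - E) :=
    isUnit_of_isUnit_diag_of_not_isUnit_apply_one_zero (by simpa using isUnit_one_sub (h 0 0))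
      (by simpa using isUnit_one_sub (h 1 1)) (by simpa using h 1 0)
  exact hE₀ (hunit.mul_right_eq_zero.mp (by rw [sub_mul, one_mul, hE.eq, sub_self]))

theorem isUnit_of_mul_eq_diagonal_mul {P E : Matrix (Fin 2) (Fin 2) R}
    (hPE : P * E = diagonal ![1, 0] * P) (h₀₀ : IsUnit (P 0 0)) (h₁ : ∃ j, IsUnit (P 1 j)) :
    IsUnit P := by
  have row₀ : P 0 0 * E 0 0 + P 0 1 * E 1 0 = P 0 0 := by
    simpa [mul_apply, Fin.sum_univ_two] using congr_fun₂ hPE 0 0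
  have row₁ : P 1 0 * E 0 0 + P 1 1 * E 1 0 = 0 := by
    simpa [mul_apply, Fin.sum_univ_two] using congr_fun₂ hPE 1 0
  obtain ⟨x, hx⟩ := h₀₀
  rw [eta_fin_two P, ← hx, isUnit_fin_two_iff_schur]
  set s := P 1 1 - P 1 0 * ↑x⁻¹ * P 0 1 with hs_def
  by_contra hs
  have h₁₀ : P 1 0 = -(s * E 1 0) := by
    have hP₁₁ : P 1 1 * E 1 0 = -(P 1 0 * E 0 0) := eq_neg_of_add_eq_zero_right row₁
    have hP₀₁ : P 0 1 * E 1 0 = ↑x - ↑x * E 0 0 := by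
      rw [hx]; exact eq_sub_of_add_eq' row₀
    rw [hs_def, sub_mul, hP₁₁, mul_assoc _ (P 0 1), hP₀₁, mul_sub, ← mul_assoc,
      Units.inv_mul_cancel_right]
    abel
  have h₁₀' : ¬IsUnit (P 1 0) := by
    rw [h₁₀, IsUnit.neg_iff]
    exact mt isUnit_of_mul_isUnit_left hs
  have h₁₁ : ¬IsUnit (P 1 1) := by
    rw [← sub_add_cancel (P 1 1) (P 1 0 * ↑x⁻¹ * P 0 1)]
    exact nonunits_add hs (mt isUnit_of_mul_isUnit_left (mt isUnit_of_mul_isUnit_left h₁₀'))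
  obtain ⟨j, hj⟩ := h₁
  fin_cases j
  exacts [h₁₀' hj, h₁₁ hj]

theorem exists_mul_eq_diagonal_mul_of_isUnit_apply_zero_zero
    {E : Matrix (Fin 2) (Fin 2) R} (hE : IsIdempotentElem E) (hE₁ : E ≠ 1)
    (h₀₀ : IsUnit (E 0 0)) : ∃ P, IsUnit P ∧ P * E = diagonal ![1, 0] * P := by
  obtain ⟨j, k, hjk⟩ :=
    exists_isUnit_apply_of_isIdempotentElem hE.one_sub (sub_ne_zero.mpr hE₁.symm)
  have hPE : of ![E 0, (1 - E) j] * E = diagonal ![1, 0] * of ![E 0, (1 - E) j] := by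
    ext i l
    fin_cases i
    · simpa [mul_apply] using congr_fun₂ hE.eq 0 l
    · have hF : (1 - E) * E = 0 := by rw [sub_mul, one_mul, hE.eq, sub_self]
      simpa [mul_apply] using congr_fun₂ hF j l
  refine ⟨_, isUnit_of_mul_eq_diagonal_mul hPE ?_ ⟨k, ?_⟩, hPE⟩
  exacts [by simpa using h₀₀, by simpa using hjk]

theorem exists_mul_eq_diagonal_mul_of_isIdempotentElem {E : Matrix (Fin 2) (Fin 2) R}
    (hE : IsIdempotentElem E) (hE₀ : E ≠ 0) (hE₁ : E ≠ 1) :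
    ∃ P, IsUnit P ∧ P * E = diagonal ![1, 0] * P := by
  rcases isUnit_or_isUnit_of_add_one (add_sub_cancel (E 0 0) 1) with h | h
  · exact exists_mul_eq_diagonal_mul_of_isUnit_apply_zero_zero hE hE₁ h
  obtain ⟨P, hP, hPE⟩ := exists_mul_eq_diagonal_mul_of_isUnit_apply_zero_zero hE.one_sub
    (by simpa using hE₀) (by simpa using h)
  have hSD : !![0, 1; 1, 0] * (1 - diagonal ![1, 0]) =
      diagonal ![(1 : R), 0] * !![0, 1; 1, 0] := by
    simp [diagonal_fin_two, one_fin_two]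
  refine ⟨!![0, 1; 1, 0] * P, isUnit_swap.mul hP, ?_⟩
  rw [mul_assoc, ← sub_sub_cancel P (P * E), ← mul_one_sub, hPE, ← one_sub_mul, ← mul_assoc,
    hSD, mul_assoc]

theorem isUnit_or_isUnit_sub_one_of_not_isUnit {A : Matrix (Fin 2) (Fin 2) R}
    (h₁₀ : ¬IsUnit (A 1 0)) (h₁₁ : ¬IsUnit (A 1 1 - A 0 0)) :
    IsUnit A ∨ IsUnit (A - 1) := by
  by_cases h₀₀ : IsUnit (A 0 0)
  · refine .inl (isUnit_of_isUnit_diag_of_not_isUnit_apply_one_zero h₀₀ ?_ h₁₀)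
    simpa using isUnit_add_of_not_isUnit h₀₀ h₁₁
  · refine .inr (isUnit_of_isUnit_diag_of_not_isUnit_apply_one_zero
      (by simpa using isUnit_sub_one h₀₀) ?_ (by simpa using h₁₀))
    simpa [sub_add_sub_cancel'] using isUnit_add_of_not_isUnit (isUnit_sub_one h₀₀) h₁₁

theorem exists_isUnit_krylov {A : Matrix (Fin 2) (Fin 2) R} (hA : ¬IsUnit A)
    (hA₁ : ¬IsUnit (A - 1)) : ∃ v, IsUnit (krylov A v) := by
  by_cases h₁₀ : IsUnit (A 1 0)
  · refine ⟨![1, 0], ?_⟩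
    simpa [krylov, mulVec, dotProduct, isUnit_fin_two_iff_schur_one] using h₁₀
  by_cases h₀₁ : IsUnit (A 0 1)
  · refine ⟨![0, 1], ?_⟩
    have hK : krylov A ![0, 1] = companion (A 0 1) (A 1 1) := by
      simp [krylov, companion, mulVec, dotProduct]
    rwa [hK, isUnit_companion_iff]
  by_cases hs : IsUnit (A 1 0 + A 1 1 - (A 0 0 + A 0 1))
  · refine ⟨![1, 1], ?_⟩
    simpa [krylov, mulVec, dotProduct, isUnit_fin_two_iff_schur_one] using hs
  have h₁₁ : ¬IsUnit (A 1 1 - A 0 0) := by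
    rw [show A 1 1 - A 0 0 = A 1 0 + A 1 1 - (A 0 0 + A 0 1) + A 0 1 - A 1 0 by abel]
    exact not_isUnit_sub (nonunits_add hs h₀₁) h₁₀
  exact ((isUnit_or_isUnit_sub_one_of_not_isUnit h₁₀ h₁₁).elim hA hA₁).elim

theorem exists_semiconjBy_companion {A : Matrix (Fin 2) (Fin 2) R} (hA : ¬IsUnit A)
    (hA₁ : ¬IsUnit (A - 1)) :
    ∃ Q, IsUnit Q ∧ ∃ α β, ¬IsUnit α ∧ ¬IsUnit (α + β - 1) ∧
      SemiconjBy Q A (companion α β) := by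
  obtain ⟨v, hv⟩ := exists_isUnit_krylov hA hA₁
  obtain ⟨Q, hQ, α, β, hQA⟩ := exists_semiconjBy_companion_of_isUnit_krylov hv
  refine ⟨Q, hQ, α, β, ?_, ?_, hQA⟩
  · rwa [← isUnit_companion_iff, ← hQA.isUnit_iff hQ]
  · rwa [← isUnit_companion_sub_one_iff,
      ← (hQA.sub_right (SemiconjBy.one_right Q)).isUnit_iff hQ]

theorem isStronglyClean_companion
    (H : ∀ w₀ w₁ : R, ¬IsUnit w₀ → ¬IsUnit w₁ →
      ∃ lam : R, ¬IsUnit lam ∧ lam ^ 2 - lam * (1 + w₁) - w₀ = 0)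
    {α β : R} (hα : ¬IsUnit α) (hαβ : ¬IsUnit (α + β - 1)) :
    IsStronglyClean (companion α β) := by
  have hβ : ¬IsUnit (β - 1) := by
    simpa [add_sub_assoc] using not_isUnit_sub hαβ hα
  obtain ⟨l, hl, hl_root⟩ := H α (β - 1) hα hβ
  have hl_eq : l * l = l * β + α := by
    rw [← sub_eq_zero, ← hl_root]; noncomm_ring
  -- `1 - l'` is a second root of `t² - tβ - α`, congruent to `1` modulo `J(R)`.
  obtain ⟨l', hl', hl'_root⟩ :=
    H (α + β - 1) (1 - β) hαβ (by rwa [← neg_sub, IsUnit.neg_iff])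
  have hl'_eq : (1 - l') * (1 - l') = (1 - l') * β + α := by
    rw [← sub_eq_zero, ← hl'_root]; noncomm_ring
  obtain ⟨Q, hQ, hQC⟩ := exists_semiconjBy_companion_diagonal hl_eq hl'_eq
    (by simpa [sub_sub] using isUnit_one_sub (nonunits_add hl' hl))
  exact .of_semiconjBy hQ hQC (isStronglyClean_diagonal fun _ => IsLocalRing.isStronglyClean _)

theorem exists_root_of_mul_companion_apply_zero_eq {P : Matrix (Fin 2) (Fin 2) R} {α β p : R}
    (hP : IsUnit P) (hp : ¬IsUnit p) (h : ∀ j, (P * companion α β) 0 j = p * P 0 j) :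
    ∃ l, ¬IsUnit l ∧ l * l = l * β + α := by
  have h₀ : P 0 1 = p * P 0 0 := by simpa [companion, mul_apply, Fin.sum_univ_two] using h 0
  have h₁ : P 0 0 * α + P 0 1 * β = p * P 0 1 := by
    simpa [companion, mul_apply, Fin.sum_univ_two] using h 1
  have hy : ¬IsUnit (P 0 1) := h₀ ▸ mt isUnit_of_mul_isUnit_left hp
  obtain ⟨x, hx⟩ : IsUnit (P 0 0) := by
    obtain ⟨j, hj⟩ := exists_isUnit_apply_of_isUnit hP 0
    fin_cases j
    exacts [hj, absurd hj hy]
  have hyx : P 0 1 * ↑x⁻¹ = p := by rw [h₀, ← hx, Units.mul_inv_cancel_right]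
  refine ⟨↑x⁻¹ * P 0 1, mt isUnit_of_mul_isUnit_right hy, ?_⟩
  calc ↑x⁻¹ * P 0 1 * (↑x⁻¹ * P 0 1) = ↑x⁻¹ * (P 0 1 * ↑x⁻¹) * P 0 1 := by
        simp only [mul_assoc]
    _ = ↑x⁻¹ * (P 0 0 * α + P 0 1 * β) := by rw [hyx, mul_assoc, h₁]
    _ = ↑x⁻¹ * P 0 1 * β + α := by
        rw [← hx, mul_add, Units.inv_mul_cancel_left, mul_assoc, add_comm]

theorem exists_root_of_isStronglyClean_companion {α β : R}
    (h : IsStronglyClean (companion α β)) (hα : ¬IsUnit α) (hαβ : ¬IsUnit (α + β - 1)) :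
    ∃ l, ¬IsUnit l ∧ l * l = l * β + α := by
  obtain ⟨E, U, hE, hU, hC, hEU⟩ := h
  have hCn : ¬IsUnit (companion α β) := isUnit_companion_iff.not.mpr hα
  have hE₀ : E ≠ 0 := by
    rintro rfl
    exact hCn (by rwa [hC, zero_add])
  have hE₁ : E ≠ 1 := by
    rintro rfl
    exact isUnit_companion_sub_one_iff.not.mpr hαβ (by rwa [hC, add_sub_cancel_left])
  obtain ⟨P, hP, hPE⟩ := exists_mul_eq_diagonal_mul_of_isIdempotentElem hE hE₀ hE₁
  obtain ⟨p, hp, hrow⟩ := exists_not_isUnit_mul_apply_zero_eq hCn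
    (by rwa [hC, add_sub_cancel_left]) (hC ▸ (Commute.refl E).add_right hEU) hP hPE
  exact exists_root_of_mul_companion_apply_zero_eq hP hp hrow

end IsLocalRing

end Matrix

/-- For a local ring `R` (where `J(R)` is the set of nonunits), `M₂(R)` is strongly clean
iff for all `w₀, w₁ ∈ J(R)` the polynomial `t² - (1+w₁)t - w₀` has a left root in
`J(R)`. -/
theorem matrix_two_stronglyClean_iff_left_root {R : Type*} [Ring R] [IsLocalRing R] :
    (∀ A : Matrix (Fin 2) (Fin 2) R, IsStronglyClean A) ↔
      (∀ w₀ w₁ : R, ¬ IsUnit w₀ → ¬ IsUnit w₁ →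
        ∃ lam : R, ¬ IsUnit lam ∧ lam ^ 2 - lam * (1 + w₁) - w₀ = 0) := by
  refine ⟨fun hSC w₀ w₁ h₀ h₁ => ?_, fun H A => ?_⟩
  · obtain ⟨l, hl, hroot⟩ :=
      Matrix.exists_root_of_isStronglyClean_companion (hSC (Matrix.companion w₀ (1 + w₁))) h₀
        (by rw [add_sub_assoc, add_sub_cancel_left]; exact IsLocalRing.nonunits_add h₀ h₁)
    exact ⟨l, hl, by rw [sq, hroot]; abel⟩
  · by_cases hA : IsUnit A
    · exact .of_isUnit hA
    by_cases hA₁ : IsUnit (A - 1)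
    · exact .of_isUnit_sub_one hA₁
    obtain ⟨Q, hQ, α, β, hα, hαβ, hQA⟩ := Matrix.exists_semiconjBy_companion hA hA₁
    exact .of_semiconjBy hQ hQA (Matrix.isStronglyClean_companion H hα hαβ)
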